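/- If M is a closed subset of Euclidean n-space contained in the bounding voxel V₀, then M is contained in the limit ⋂_{t ∈ ℕ} C_t(M) of the subdivision approximations, and the difference (⋂_{t ∈ ℕ} C_t(M)) \ M has Lebesgue measure zero (indeed, it is empty). -/

import Mathlib

open Set Metric Filter MeasureTheory ENNReal

noncomputable section

variable {n : ℕ}

/-- The bounding voxel `V₀ = {x | ∀ i, a i ≤ x i ∧ x i < b i}`. -/
def boundingVoxel (a b : EuclideanSpace ℝ (Fin n)) : Set (EuclideanSpace ℝ (Fin n)) :=
  {x | ∀ i, a i ≤ x i ∧ x i < b i}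

/-- The level-`t` dyadic sub-voxel `D_t(k)`. -/
def subVoxel (a b : EuclideanSpace ℝ (Fin n)) (t : ℕ) (k : Fin n → ℕ) :
    Set (EuclideanSpace ℝ (Fin n)) :=
  {x | ∀ i, a i + (k i : ℝ) * (b i - a i) / 2 ^ t ≤ x i ∧
            x i < a i + ((k i : ℝ) + 1) * (b i - a i) / 2 ^ t}

/-- The retained indices `Q_t(M)`: admissible `k` whose closed sub-voxel meets `M`. -/
def retained (a b : EuclideanSpace ℝ (Fin n)) (t : ℕ) (M : Set (EuclideanSpace ℝ (Fin n))) :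
    Set (Fin n → ℕ) :=
  {k | (∀ i, k i < 2 ^ t) ∧ (closure (subVoxel a b t k) ∩ M).Nonempty}

/-- The level-`t` approximation `C_t(M)`: union of the closures of retained sub-voxels. -/
def approx (a b : EuclideanSpace ℝ (Fin n)) (t : ℕ) (M : Set (EuclideanSpace ℝ (Fin n))) :
    Set (EuclideanSpace ℝ (Fin n)) :=
  ⋃ k ∈ retained a b t M, closure (subVoxel a b t k)

/-! Each retained closed sub-voxel meets `M` and has diameter at most `dist a b / 2 ^ t`, so
`C_t(M)` lies in the closed `dist a b / 2 ^ t`-thickening of `M`; letting `t → ∞` squeezes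
`⋂ t, C_t(M)` into `closure M = M`. Conversely, for `a < b` the level-`t` sub-voxels partition
`V₀`, so every point of `M ⊆ V₀` lies in a retained sub-voxel. -/

theorem dist_le_of_mem_closure {α : Type*} [PseudoMetricSpace α] {s : Set α} {C : ℝ}
    (h : ∀ x ∈ s, ∀ y ∈ s, dist x y ≤ C) {x y : α}
    (hx : x ∈ closure s) (hy : y ∈ closure s) :
    dist x y ≤ C := by
  have hclosed : IsClosed {p : α × α | dist p.1 p.2 ≤ C} :=
    isClosed_le continuous_dist continuous_const
  have hxy : (x, y) ∈ closure (s ×ˢ s) := by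
    rw [closure_prod_eq]
    exact ⟨hx, hy⟩
  exact closure_minimal (fun p hp => h _ hp.1 _ hp.2) hclosed hxy

theorem EuclideanSpace.dist_le_dist_of_forall_dist_le {ι : Type*} [Fintype ι]
    {x y u v : EuclideanSpace ℝ ι} (h : ∀ i, dist (x i) (y i) ≤ dist (u i) (v i)) :
    dist x y ≤ dist u v := by
  rw [EuclideanSpace.dist_eq, EuclideanSpace.dist_eq]
  gcongr with i
  exact h i

theorem iInter_cthickening_div_two_pow_subset_closure {α : Type*} [PseudoMetricSpace α]
    (c : ℝ) (s : Set α) : ⋂ t : ℕ, cthickening (c / 2 ^ t) s ⊆ closure s := by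
  rw [closure_eq_iInter_cthickening]
  refine subset_iInter₂ fun δ hδ => ?_
  obtain ⟨t, ht⟩ := pow_unbounded_of_one_lt (c / δ) one_lt_two
  have hct : c / 2 ^ t ≤ δ := by
    rw [div_lt_iff₀ hδ] at ht
    rw [div_le_iff₀ (by positivity)]
    linarith
  exact (iInter_subset _ t).trans (cthickening_mono hct s)

theorem exists_lt_two_pow_mem_dyadic_Ico {a b x : ℝ} (hab : a < b) (hx : x ∈ Ico a b)
    (t : ℕ) :
    ∃ j : ℕ, j < 2 ^ t ∧
      a + j * (b - a) / 2 ^ t ≤ x ∧ x < a + (j + 1) * (b - a) / 2 ^ t := by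
  set w := (b - a) / 2 ^ t
  have hw : 0 < w := div_pos (sub_pos.2 hab) (by positivity)
  have hq : 0 ≤ (x - a) / w := div_nonneg (sub_nonneg.2 hx.1) hw.le
  refine ⟨⌊(x - a) / w⌋₊, ?_, ?_, ?_⟩
  · rw [Nat.floor_lt hq, div_lt_iff₀ hw]
    have : (2 : ℝ) ^ t * w = b - a := mul_div_cancel₀ _ (by positivity)
    push_cast
    linarith [hx.2]
  · have := (le_div_iff₀ hw).1 (Nat.floor_le hq)
    rw [mul_div_assoc]
    linarith
  · have := (div_lt_iff₀ hw).1 (Nat.lt_floor_add_one ((x - a) / w))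
    rw [mul_div_assoc]
    linarith

variable {a b : EuclideanSpace ℝ (Fin n)}

theorem exists_mem_subVoxel (hab : ∀ i, a i < b i) {x : EuclideanSpace ℝ (Fin n)}
    (hx : x ∈ boundingVoxel a b) (t : ℕ) :
    ∃ k : Fin n → ℕ, (∀ i, k i < 2 ^ t) ∧ x ∈ subVoxel a b t k := by
  choose k hk using fun i => exists_lt_two_pow_mem_dyadic_Ico (hab i) (hx i) t
  exact ⟨k, fun i => (hk i).1, fun i => (hk i).2⟩

theorem dist_le_of_mem_subVoxel {t : ℕ} {k : Fin n → ℕ} {x y : EuclideanSpace ℝ (Fin n)}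
    (hx : x ∈ subVoxel a b t k) (hy : y ∈ subVoxel a b t k) :
    dist x y ≤ dist a b / 2 ^ t := by
  have h2t : (0 : ℝ) < 2 ^ t := by positivity
  have hscale :
      dist a b / 2 ^ t = dist (((2 : ℝ) ^ t)⁻¹ • a) (((2 : ℝ) ^ t)⁻¹ • b) := by
    rw [dist_smul₀, Real.norm_of_nonneg (by positivity), inv_mul_eq_div]
  rw [hscale]
  refine EuclideanSpace.dist_le_dist_of_forall_dist_le fun i => ?_
  simp only [PiLp.smul_apply, smul_eq_mul, Real.dist_eq, inv_mul_eq_div, ← sub_div, abs_div,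
    abs_of_pos h2t]
  rw [abs_sub_comm (a i)]
  have hwidth : a i + (k i + 1) * (b i - a i) / 2 ^ t - (a i + k i * (b i - a i) / 2 ^ t)
      = (b i - a i) / 2 ^ t := by ring
  refine (abs_sub_le_iff.2 ⟨?_, ?_⟩).trans (div_le_div_of_nonneg_right (le_abs_self _) h2t.le)
  · linarith [(hx i).2, (hy i).1]
  · linarith [(hx i).1, (hy i).2]

theorem subset_approx {t : ℕ} (hab : ∀ i, a i < b i) {M : Set (EuclideanSpace ℝ (Fin n))}
    (hM : M ⊆ boundingVoxel a b) : M ⊆ approx a b t M := fun x hxM => by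
  obtain ⟨k, hk, hxk⟩ := exists_mem_subVoxel hab (hM hxM) t
  exact mem_biUnion ⟨hk, x, subset_closure hxk, hxM⟩ (subset_closure hxk)

theorem approx_subset_cthickening {t : ℕ} (M : Set (EuclideanSpace ℝ (Fin n))) :
    approx a b t M ⊆ cthickening (dist a b / 2 ^ t) M := by
  refine iUnion₂_subset fun k hk x hx => ?_
  obtain ⟨y, hy, hyM⟩ := hk.2
  exact mem_cthickening_of_dist_le x y _ M hyM
    (dist_le_of_mem_closure (fun _ hx' _ hy' => dist_le_of_mem_subVoxel hx' hy') hx hy)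

theorem iInter_approx_subset_closure (M : Set (EuclideanSpace ℝ (Fin n))) :
    ⋂ t : ℕ, approx a b t M ⊆ closure M :=
  (iInter_mono fun _ => approx_subset_cthickening M).trans
    (iInter_cthickening_div_two_pow_subset_closure _ M)

theorem closed_subset_iInter_approx_general
    (n : ℕ) (a b : EuclideanSpace ℝ (Fin n)) (hab : ∀ i, a i < b i)
    (M : Set (EuclideanSpace ℝ (Fin n))) (hMc : IsClosed M) (hM : M ⊆ boundingVoxel a b) :
    M ⊆ (⋂ t : ℕ, approx a b t M) ∧
      volume ((⋂ t : ℕ, approx a b t M) \ M) = 0 ∧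
      ((⋂ t : ℕ, approx a b t M) \ M) = ∅ := by
  have hdiff : (⋂ t : ℕ, approx a b t M) \ M = ∅ :=
    sdiff_eq_empty.2 ((iInter_approx_subset_closure M).trans hMc.closure_subset)
  exact ⟨subset_iInter fun _ => subset_approx hab hM, by rw [hdiff, measure_empty], hdiff⟩

/-- for closed `M ⊆ V₀`, `M` is contained in the limit, and the difference
has Lebesgue measure zero (indeed, it is empty). -/
theorem closed_subset_iInter_approx
    (n : ℕ) (hn : 1 ≤ n) (a b : EuclideanSpace ℝ (Fin n)) (hab : ∀ i, a i < b i)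
    (M : Set (EuclideanSpace ℝ (Fin n))) (hMc : IsClosed M) (hM : M ⊆ boundingVoxel a b) :
    M ⊆ (⋂ t : ℕ, approx a b t M) ∧
      volume ((⋂ t : ℕ, approx a b t M) \ M) = 0 ∧
      ((⋂ t : ℕ, approx a b t M) \ M) = ∅ :=
  closed_subset_iInter_approx_general n a b hab M hMc hM
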